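/- arXiv:1010.0624 — 4 statements merged into one kernel-verified Lean document; each statement's English description precedes it below -/
import Mathlib

section
/- Suppose f ∈ L¹([-π,π]) is a probability density that is symmetric about 0 (f(-x) = f(x)), convex on (0,π], and decreasing on (0,π]. Then all Fourier coefficients of f are nonnegative: for every integer m, ∫_{-π}^{π} f(x) cos(mx) dx ≥ 0. -/
open Real MeasureTheory Set

/-!
Rescaling `x ↦ k x` and folding the even integrand onto `[0, π]` reduce the claim to
`0 ≤ ∫ t in 0..n * π, g t * cos t` for `g` convex and decreasing on `(0, n π]`. On the `j`-th
half period this integral is `(-1) ^ j * I j` with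
`I j = ∫ s in 0..π / 2, (g (j π + s) - g (j π + π - s)) * cos s`. Monotonicity of `g` gives
`0 ≤ I j`, convexity gives `I (j + 1) ≤ I j`, and an alternating sum of a nonnegative decreasing
sequence is nonnegative.
-/

theorem sum_range_succ_neg_one_pow_mul_mem_Icc {E : Type*} [Ring E] [LinearOrder E]
    [IsStrictOrderedRing E] {D : ℕ → E} {n : ℕ} (hanti : ∀ j < n, D (j + 1) ≤ D j)
    (hlast : 0 ≤ D n) : ∑ j ∈ Finset.range (n + 1), (-1) ^ j * D j ∈ Icc 0 (D 0) := by
  induction n generalizing D with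
  | zero => simpa using hlast
  | succ n ih =>
    obtain ⟨hS₀, hS₁⟩ :=
      ih (D := fun j => D (j + 1)) (fun j hj => hanti (j + 1) (by omega)) hlast
    have hD : D 1 ≤ D 0 := hanti 0 n.succ_pos
    rw [Finset.sum_range_succ']
    simp only [pow_succ, mul_neg_one, neg_mul, Finset.sum_neg_distrib, pow_zero, one_mul,
      zero_add, neg_add_eq_sub] at hS₁ ⊢
    exact ⟨sub_nonneg.2 (hS₁.trans hD), sub_le_self _ hS₀⟩

theorem ConvexOn.map_add_sub_map_le_map_add_sub_map {s : Set ℝ} {g : ℝ → ℝ}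
    (hg : ConvexOn ℝ s g) {x y d : ℝ} (hx : x ∈ s) (hyd : y + d ∈ s) (hxy : x ≤ y)
    (hd : 0 ≤ d) :
    g (x + d) - g x ≤ g (y + d) - g y := by
  rcases (show x ≤ y + d by linarith).eq_or_lt with h | h
  · obtain rfl : d = 0 := by linarith
    simp
  -- `x + d` and `y` are the convex combinations of `x` and `y + d` with weights `(1 - t, t)`
  -- and `(t, 1 - t)`.
  set t := d / (y + d - x)
  have hL : 0 < y + d - x := by linarith
  have ht : t * (y + d - x) = d := div_mul_cancel₀ _ hL.ne'
  have ht₀ : 0 ≤ t := div_nonneg hd hL.le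
  have ht₁ : 0 ≤ 1 - t := sub_nonneg.2 ((div_le_one hL).2 (by linarith))
  have h₁ := hg.2 hx hyd ht₁ ht₀ (by ring)
  have h₂ := hg.2 hx hyd ht₀ ht₁ (by ring)
  simp only [smul_eq_mul] at h₁ h₂
  rw [show (1 - t) * x + t * (y + d) = x + d by linear_combination ht] at h₁
  rw [show t * x + (1 - t) * (y + d) = y by linear_combination -ht] at h₂
  linarith

theorem intervalIntegral.integral_symmetric_eq_two_smul_of_even {E : Type*}
    [NormedAddCommGroup E] [NormedSpace ℝ E] {φ : ℝ → E} {a : ℝ} (heven : ∀ x, φ (-x) = φ x)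
    (hφ : IntervalIntegrable φ volume 0 a) :
    ∫ x in -a..a, φ x = (2 : ℝ) • ∫ x in 0..a, φ x := by
  have hfold : ∫ x in -a..0, φ x = ∫ x in 0..a, φ x := by
    simpa [heven] using (integral_comp_neg (a := 0) (b := a) φ).symm
  have hφ' : IntervalIntegrable φ volume (-a) 0 := by
    simpa [heven] using (hφ.comp_sub_left 0).symm
  rw [← integral_add_adjacent_intervals hφ' hφ, hfold, two_smul]

theorem IntervalIntegrable.sub_reflect_mul_cos {φ : ℝ → ℝ}
    (hφ : IntervalIntegrable φ volume 0 π) :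
    IntervalIntegrable (fun s => (φ s - φ (π - s)) * cos s) volume 0 (π / 2) := by
  have hφ' : IntervalIntegrable (fun s => φ (π - s)) volume 0 π := by
    simpa using (hφ.comp_sub_left π).symm
  refine ((hφ.sub hφ').mul_continuousOn continuousOn_cos).mono_set (uIcc_subset_uIcc_left ?_)
  rw [uIcc_of_le pi_pos.le]
  constructor <;> linarith [pi_pos]

theorem integral_mul_cos_eq_integral_sub_reflect_mul_cos {φ : ℝ → ℝ}
    (hφ : IntervalIntegrable φ volume 0 π) :
    ∫ s in 0..π, φ s * cos s = ∫ s in 0..π / 2, (φ s - φ (π - s)) * cos s := by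
  have hmid : π / 2 ∈ uIcc 0 π := by
    rw [uIcc_of_le pi_pos.le]
    constructor <;> linarith [pi_pos]
  have hφc := hφ.mul_continuousOn continuousOn_cos
  have hφ'c : IntervalIntegrable (fun s => φ (π - s) * cos s) volume 0 π := by
    simpa using ((hφ.comp_sub_left π).symm).mul_continuousOn continuousOn_cos
  have hreflect : ∫ s in π / 2..π, φ s * cos s = -∫ s in 0..π / 2, φ (π - s) * cos s := by
    rw [← intervalIntegral.integral_neg]
    simpa [cos_pi_sub, sub_half] using (intervalIntegral.integral_comp_sub_left
      (fun s => φ s * cos s) π (a := 0) (b := π / 2)).symm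
  rw [← intervalIntegral.integral_add_adjacent_intervals
    (hφc.mono_set (uIcc_subset_uIcc_left hmid)) (hφc.mono_set (uIcc_subset_uIcc_right hmid)),
    hreflect, ← sub_eq_add_neg, ← intervalIntegral.integral_sub
      (hφc.mono_set (uIcc_subset_uIcc_left hmid)) (hφ'c.mono_set (uIcc_subset_uIcc_left hmid))]
  simp only [sub_mul]

/-- `∫ t in a..a + π, g t * cos (t - a)`, folded onto `[0, π / 2]` by `cos (π - s) = -cos s`. -/
noncomputable def halfWaveIntegral (g : ℝ → ℝ) (a : ℝ) : ℝ :=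
  ∫ s in 0..π / 2, (g (a + s) - g (a + π - s)) * cos s

theorem integral_mul_cos_eq_neg_one_pow_mul_halfWaveIntegral {g : ℝ → ℝ} (j : ℕ)
    (hg : IntervalIntegrable g volume (j * π) (j * π + π)) :
    ∫ t in j * π..j * π + π, g t * cos t = (-1) ^ j * halfWaveIntegral g (j * π) := by
  have hshift : IntervalIntegrable (fun s => g (j * π + s)) volume 0 π := by
    simpa [add_comm] using hg.comp_add_right (j * π)
  calc ∫ t in j * π..j * π + π, g t * cos t
      = ∫ s in 0..π, g (j * π + s) * cos (j * π + s) := by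
        simpa using (intervalIntegral.integral_comp_add_left (fun t => g t * cos t) (j * π)
          (a := 0) (b := π)).symm
    _ = (-1) ^ j * ∫ s in 0..π, g (j * π + s) * cos s := by
        rw [← intervalIntegral.integral_const_mul]
        congr 1 with s
        rw [add_comm, cos_add_nat_mul_pi]
        ring
    _ = (-1) ^ j * halfWaveIntegral g (j * π) := by
        rw [integral_mul_cos_eq_integral_sub_reflect_mul_cos hshift, halfWaveIntegral]
        simp only [add_sub_assoc]

theorem integral_mul_cos_eq_sum_halfWaveIntegral {g : ℝ → ℝ} {n : ℕ}
    (hg : IntervalIntegrable g volume 0 (n * π)) :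
    ∫ t in 0..n * π, g t * cos t =
      ∑ j ∈ Finset.range n, (-1) ^ j * halfWaveIntegral g (j * π) := by
  have hpiece : ∀ j < n, IntervalIntegrable g volume (j * π) (j * π + π) := by
    intro j hj
    have hj' : (j : ℝ) + 1 ≤ n := by exact_mod_cast hj
    refine hg.mono_set ?_
    rw [uIcc_of_le (by linarith [pi_pos]), uIcc_of_le (by positivity)]
    exact Icc_subset_Icc (by positivity) (by nlinarith [pi_pos])
  have := intervalIntegral.sum_integral_adjacent_intervals (a := fun j : ℕ => j * π)
    (f := fun t => g t * cos t) (μ := volume) (n := n) fun j hj => by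
      simpa [add_mul] using (hpiece j hj).mul_continuousOn continuousOn_cos
  push_cast [zero_mul, add_mul, one_mul] at this
  rw [← this]
  exact Finset.sum_congr rfl fun j hj =>
    integral_mul_cos_eq_neg_one_pow_mul_halfWaveIntegral j (hpiece j (Finset.mem_range.1 hj))

theorem intervalIntegrable_halfWave {g : ℝ → ℝ} {a : ℝ}
    (hg : IntervalIntegrable g volume a (a + π)) :
    IntervalIntegrable (fun s => (g (a + s) - g (a + π - s)) * cos s) volume 0 (π / 2) := by
  have hshift : IntervalIntegrable (fun s => g (a + s)) volume 0 π := by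
    simpa [add_comm] using hg.comp_add_right a
  simpa only [add_sub_assoc] using hshift.sub_reflect_mul_cos

theorem halfWaveIntegral_nonneg {g : ℝ → ℝ} {a : ℝ} (hanti : AntitoneOn g (Ioc a (a + π))) :
    0 ≤ halfWaveIntegral g a := by
  rw [halfWaveIntegral, intervalIntegral.integral_of_le (by positivity)]
  refine setIntegral_nonneg measurableSet_Ioc fun s ⟨hs₀, hs₁⟩ =>
    mul_nonneg (sub_nonneg.2 ?_) ?_
  · exact hanti ⟨by linarith, by linarith⟩ ⟨by linarith, by linarith⟩ (by linarith)
  · exact cos_nonneg_of_mem_Icc ⟨by linarith [pi_pos], hs₁⟩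

theorem halfWaveIntegral_add_pi_le {g : ℝ → ℝ} {a : ℝ}
    (hg : IntervalIntegrable g volume a (a + 2 * π))
    (hconv : ConvexOn ℝ (Ioc a (a + 2 * π)) g) :
    halfWaveIntegral g (a + π) ≤ halfWaveIntegral g a := by
  have hmid : a + π ∈ uIcc a (a + 2 * π) := by
    rw [uIcc_of_le (by linarith [pi_pos])]
    constructor <;> linarith [pi_pos]
  have hsecond : IntervalIntegrable g volume (a + π) (a + π + π) := by
    simpa [two_mul, add_assoc] using hg.mono_set (uIcc_subset_uIcc_right hmid)
  refine intervalIntegral.integral_mono_on_of_le_Ioo (by positivity)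
    (intervalIntegrable_halfWave hsecond)
    (intervalIntegrable_halfWave (hg.mono_set (uIcc_subset_uIcc_left hmid)))
    fun s ⟨hs₀, hs₁⟩ => ?_
  refine mul_le_mul_of_nonneg_right ?_
    (cos_nonneg_of_mem_Icc ⟨by linarith [pi_pos], hs₁.le⟩)
  have := hconv.map_add_sub_map_le_map_add_sub_map (x := a + s) (y := a + π + s) (d := π - 2 * s)
    ⟨by linarith, by linarith [pi_pos]⟩ ⟨by linarith, by linarith⟩ (by linarith [pi_pos])
    (by linarith)
  ring_nf at this ⊢
  linarith

theorem integral_mul_cos_nonneg_of_convexOn_of_antitoneOn {g : ℝ → ℝ} {n : ℕ}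
    (hg : IntervalIntegrable g volume 0 (n * π)) (hconv : ConvexOn ℝ (Ioc 0 (n * π)) g)
    (hanti : AntitoneOn g (Ioc 0 (n * π))) : 0 ≤ ∫ t in 0..n * π, g t * cos t := by
  rcases n with _ | n
  · simp
  rw [integral_mul_cos_eq_sum_halfWaveIntegral hg]
  refine (sum_range_succ_neg_one_pow_mul_mem_Icc (fun j hj => ?_) ?_).1
  · have hj' : (j : ℝ) + 1 ≤ n := by exact_mod_cast hj
    have hle : (j : ℝ) * π + 2 * π ≤ (n + 1 : ℕ) * π := by push_cast; nlinarith [pi_pos]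
    rw [Nat.cast_succ, add_one_mul]
    refine halfWaveIntegral_add_pi_le (hg.mono_set ?_)
      (hconv.subset (Ioc_subset_Ioc (by positivity) hle) (convex_Ioc _ _))
    rw [uIcc_of_le (by linarith [pi_pos]), uIcc_of_le (by positivity)]
    exact Icc_subset_Icc (by positivity) hle
  · exact halfWaveIntegral_nonneg
      (hanti.mono (Ioc_subset_Ioc (by positivity) (by push_cast; linarith)))

theorem integral_mul_cos_nat_mul_nonneg_of_convexOn_of_antitoneOn {f : ℝ → ℝ} {k : ℕ}
    (hk : k ≠ 0) (hf : IntervalIntegrable f volume 0 π) (hconv : ConvexOn ℝ (Ioc 0 π) f)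
    (hanti : AntitoneOn f (Ioc 0 π)) : 0 ≤ ∫ x in 0..π, f x * cos (k * x) := by
  have hk₀ : (0 : ℝ) < k := by positivity
  set g : ℝ → ℝ := fun t => f ((k : ℝ)⁻¹ * t)
  have hmaps : MapsTo (fun t => (k : ℝ)⁻¹ * t) (Ioc 0 (k * π)) (Ioc 0 π) :=
    fun t ⟨ht₀, ht₁⟩ => ⟨by positivity, by rwa [inv_mul_le_iff₀ hk₀]⟩
  have hrescale :
      ∫ x in 0..π, f x * cos (k * x) = (k : ℝ)⁻¹ * ∫ t in 0..k * π, g t * cos t := by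
    simpa [g, hk₀.ne'] using
      intervalIntegral.integral_comp_mul_left (fun t => g t * cos t) hk₀.ne' (a := 0) (b := π)
  rw [hrescale]
  refine mul_nonneg (inv_nonneg.2 hk₀.le)
    (integral_mul_cos_nonneg_of_convexOn_of_antitoneOn ?_ ?_ ?_)
  · simpa [mul_comm π] using hf.comp_mul_left (c := (k : ℝ)⁻¹)
  · exact (hconv.comp_linearMap ((k : ℝ)⁻¹ • LinearMap.id)).subset hmaps (convex_Ioc _ _)
  · exact hanti.comp_MonotoneOn
      ((monotone_mul_left_of_nonneg (inv_nonneg.2 hk₀.le)).monotoneOn _) hmaps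

theorem fourier_coeffs_nonneg_of_symmetric_convex_decreasing
    (f : ℝ → ℝ)
    (hint : IntegrableOn f (Icc (-π) π))
    (hprob : ∫ x in Icc (-π) π, f x = 1)
    (heven : ∀ x, f (-x) = f x)
    (hconv : ConvexOn ℝ (Ioc 0 π) f)
    (hdec : AntitoneOn f (Ioc 0 π)) :
    ∀ m : ℤ, 0 ≤ ∫ x in Icc (-π) π, f x * Real.cos (m * x) := by
  intro m
  obtain ⟨k, hk⟩ : ∃ k : ℕ, ∀ x, cos (m * x) = cos (k * x) := by
    obtain ⟨k, rfl | rfl⟩ := Int.eq_nat_or_neg m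
    exacts [⟨k, fun x => by simp⟩, ⟨k, fun x => by simp [neg_mul]⟩]
  simp_rw [hk]
  rcases eq_or_ne k 0 with rfl | hk₀
  · simp [hprob]
  have hfi₀ : IntervalIntegrable f volume 0 π :=
    (intervalIntegrable_iff_integrableOn_Icc_of_le pi_pos.le).2
      (hint.mono_set (Icc_subset_Icc (by linarith [pi_pos]) le_rfl))
  rw [integral_Icc_eq_integral_Ioc, ← intervalIntegral.integral_of_le (by linarith [pi_pos]),
    intervalIntegral.integral_symmetric_eq_two_smul_of_even (fun x => by simp [heven, mul_neg])
      (hfi₀.mul_continuousOn (by fun_prop)), smul_eq_mul]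
  exact mul_nonneg zero_le_two
    (integral_mul_cos_nat_mul_nonneg_of_convexOn_of_antitoneOn hk₀ hfi₀ hconv hdec)
end

section
/- The Fourier cosine coefficients of f(x) = (1/(2π)) log(π/|x|) are given by (1/π) ∫_0^π log(π/x) cos(mx) dx = Si(mπ)/(mπ) for every integer m ≥ 1, where Si(t) = ∫_0^t (sin x)/x dx is the sine integral. -/
/-!
Integrate by parts on `[0, c]`: `log (c / x) * sin (M x) / M` is an antiderivative of
`log (c / x) * cos (M x) - sinc (M x)` on `(0, c)`, it vanishes at `c` since `log 1 = 0`, and it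
vanishes at `0` and is continuous there because it equals `x * log (c / x) * sinc (M x)`.
Hence the cosine coefficient of `log (c / x)` is `∫₀^c sinc (M x) dx`, and the substitution
`x ↦ M x` turns this into the sine integral `Si (M c) / M`.
-/

open Real MeasureTheory Set intervalIntegral

lemma intervalIntegrable_log_const_div {c : ℝ} (hc : c ≠ 0) (a b : ℝ) :
    IntervalIntegrable (fun x ↦ log (c / x)) volume a b := by
  refine ((intervalIntegrable_const (c := log c)).sub intervalIntegrable_log').congr_ae ?_
  filter_upwards [ae_restrict_of_ae (volume.ae_ne 0)] with x hx
  rw [log_div hc hx]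

lemma integral_sinc_eq_integral_sin_div (a b : ℝ) :
    ∫ x in a..b, sinc x = ∫ x in a..b, sin x / x :=
  integral_congr_ae <| (volume.ae_ne 0).mono fun _ hx _ ↦ sinc_of_ne_zero hx

lemma continuous_mul_log_const_div {c : ℝ} (hc : c ≠ 0) :
    Continuous fun x ↦ x * log (c / x) := by
  have : (fun x ↦ x * log (c / x)) = fun x ↦ x * log c - x * log x := by
    ext x
    rcases eq_or_ne x 0 with rfl | hx
    · simp
    · rw [log_div hc hx]; ring
  rw [this]
  exact (continuous_id.mul continuous_const).sub continuous_mul_log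

lemma log_div_mul_sin_div_eq_mul_sinc {c M : ℝ} (hM : M ≠ 0) (x : ℝ) :
    log (c / x) * sin (M * x) / M = x * log (c / x) * sinc (M * x) := by
  rcases eq_or_ne x 0 with rfl | hx
  · simp
  · rw [sinc_of_ne_zero (mul_ne_zero hM hx)]
    field_simp

lemma hasDerivAt_log_div_mul_sin_div {c M x : ℝ} (hc : c ≠ 0) (hM : M ≠ 0) (hx : x ≠ 0) :
    HasDerivAt (fun y ↦ log (c / y) * sin (M * y) / M)
      (log (c / x) * cos (M * x) - sinc (M * x)) x := by
  have hlog : HasDerivAt (fun y ↦ log (c / y)) (-x⁻¹) x :=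
    (((hasDerivAt_inv hx).const_mul c).log (by simp [hc, hx])).congr_deriv (by field_simp)
  have hsin : HasDerivAt (fun y ↦ sin (M * y)) (cos (M * x) * M) x := by
    simpa using ((hasDerivAt_id x).const_mul M).sin
  refine ((hlog.mul hsin).div_const M).congr_deriv ?_
  rw [sinc_of_ne_zero (mul_ne_zero hM hx)]
  field_simp
  ring

theorem integral_log_div_mul_cos_eq_integral_sinc {c M : ℝ} (hc : 0 < c) (hM : M ≠ 0) :
    ∫ x in 0..c, log (c / x) * cos (M * x) = ∫ x in 0..c, sinc (M * x) := by
  have hcont : Continuous fun x ↦ log (c / x) * sin (M * x) / M := by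
    simp_rw [log_div_mul_sin_div_eq_mul_sinc hM]
    exact (continuous_mul_log_const_div hc.ne').mul (continuous_sinc.comp (continuous_const_mul M))
  have hint_log : IntervalIntegrable (fun x ↦ log (c / x) * cos (M * x)) volume 0 c :=
    (intervalIntegrable_log_const_div hc.ne' 0 c).mul_continuousOn (by fun_prop)
  have hint_sinc : IntervalIntegrable (fun x ↦ sinc (M * x)) volume 0 c :=
    (continuous_sinc.comp (continuous_const_mul M)).intervalIntegrable 0 c
  have hftc := integral_eq_sub_of_hasDerivAt_of_le hc.le hcont.continuousOn
    (fun x hx ↦ hasDerivAt_log_div_mul_sin_div hc.ne' hM hx.1.ne') (hint_log.sub hint_sinc)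
  rw [integral_sub hint_log hint_sinc] at hftc
  simpa [sub_eq_zero] using hftc

theorem fourier_coeff_log_density_eq_sine_integral (m : ℕ) (hm : 1 ≤ m) :
    (1 / π) * ∫ x in (0:ℝ)..π, Real.log (π / x) * Real.cos (m * x) =
      (∫ x in (0:ℝ)..(m * π), Real.sin x / x) / (m * π) := by
  have hm' : (m : ℝ) ≠ 0 := by exact_mod_cast Nat.one_le_iff_ne_zero.mp hm
  rw [integral_log_div_mul_cos_eq_integral_sinc pi_pos hm',
    integral_comp_mul_left (fun x ↦ sinc x) hm', mul_zero,
    integral_sinc_eq_integral_sin_div, smul_eq_mul]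
  field_simp
end

section
/- The sine integral is positive: Si(t) = ∫_0^t (sin x)/x dx > 0 for all t > 0. -/
open Real MeasureTheory intervalIntegral Set

/-!
Over a period `[2πn, 2π(n+1)]` the positive lobe of `sin x / x` outweighs the negative one,
because `1 / x` decreases; hence `Si(2πn) ≥ 0`, strictly for `n ≥ 1`. If `t` lies in the
positive lobe of its period then `Si t > Si(2πn) ≥ 0`; if it lies in the negative lobe then
`Si t ≥ Si(2π(n+1)) > 0`.
-/

lemma intervalIntegrable_sin_div_self (a b : ℝ) :
    IntervalIntegrable (fun x => sin x / x) volume a b :=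
  (continuous_sinc.intervalIntegrable a b).congr_ae <| ae_restrict_of_ae <| by
    filter_upwards [Measure.ae_ne volume 0] with x hx using sinc_of_ne_zero hx

lemma sin_pos_of_mem_Ioo_nat_mul_two_pi {n : ℕ} {x : ℝ}
    (hx : x ∈ Ioo (n * (2 * π)) (n * (2 * π) + π)) : 0 < sin x := by
  rw [← sin_sub_nat_mul_two_pi x n]
  exact sin_pos_of_pos_of_lt_pi (by linarith [hx.1]) (by linarith [hx.2])

lemma integral_sin_div_self_pos_of_le_add_pi {n : ℕ} {t : ℝ} (h₁ : n * (2 * π) < t)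
    (h₂ : t ≤ n * (2 * π) + π) : 0 < ∫ x in n * (2 * π)..t, sin x / x := by
  refine intervalIntegral_pos_of_pos_on (intervalIntegrable_sin_div_self _ _) (fun x hx => ?_) h₁
  have hx₀ : 0 < x := (by positivity : (0 : ℝ) ≤ n * (2 * π)).trans_lt hx.1
  exact div_pos (sin_pos_of_mem_Ioo_nat_mul_two_pi ⟨hx.1, hx.2.trans_le h₂⟩) hx₀

lemma integral_sin_div_self_nonpos_of_add_pi_le {n : ℕ} {t : ℝ} (h₁ : n * (2 * π) + π ≤ t)
    (h₂ : t ≤ (n + 1) * (2 * π)) : ∫ x in t..(n + 1) * (2 * π), sin x / x ≤ 0 := by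
  have hneg : 0 ≤ ∫ x in t..(n + 1) * (2 * π), -(sin x / x) := by
    refine integral_nonneg h₂ fun x hx => neg_nonneg.2 (div_nonpos_of_nonpos_of_nonneg ?_ ?_)
    · rw [← sin_sub_nat_mul_two_pi x (n + 1)]
      push_cast
      exact sin_nonpos_of_nonpos_of_neg_pi_le (by linarith [hx.2]) (by linarith [hx.1])
    · linarith [hx.1, pi_pos, (by positivity : (0 : ℝ) ≤ n * (2 * π))]
  rwa [intervalIntegral.integral_neg, neg_nonneg] at hneg

/-- Shifting the negative lobe by `π` onto the positive one, the period contributes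
`∫ sin x * (1 / x - 1 / (x + π))` over `[2πn, 2πn + π]`, whose integrand is positive. -/
lemma integral_sin_div_self_period_pos (n : ℕ) :
    0 < ∫ x in n * (2 * π)..(n + 1) * (2 * π), sin x / x := by
  set a : ℝ := n * (2 * π)
  have ha : 0 ≤ a := by positivity
  have hend : (n + 1) * (2 * π) = a + π + π := by ring
  have hshift : ∫ x in a + π..(n + 1) * (2 * π), sin x / x
      = ∫ x in a..a + π, -(sin x / (x + π)) := by
    rw [hend, ← integral_comp_add_right (fun x => sin x / x)]
    simp only [sin_add_pi, neg_div]
  have hint : IntervalIntegrable (fun x => -(sin x / (x + π))) volume a (a + π) := by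
    simpa only [sin_add_pi, neg_div, add_sub_cancel_right] using
      (intervalIntegrable_sin_div_self (a + π) (a + π + π)).comp_add_right π
  rw [← integral_add_adjacent_intervals (intervalIntegrable_sin_div_self _ (a + π))
    (intervalIntegrable_sin_div_self _ _), hshift,
    ← intervalIntegral.integral_add (intervalIntegrable_sin_div_self _ _) hint]
  refine intervalIntegral_pos_of_pos_on ((intervalIntegrable_sin_div_self _ _).add hint)
    (fun x hx => ?_) (by linarith [pi_pos])
  have hx₀ : 0 < x := ha.trans_lt hx.1
  have : sin x / (x + π) < sin x / x :=
    div_lt_div_of_pos_left (sin_pos_of_mem_Ioo_nat_mul_two_pi hx) hx₀ (by linarith [pi_pos])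
  linarith

lemma integral_sin_div_self_zero_nat_mul_two_pi_nonneg (n : ℕ) :
    0 ≤ ∫ x in (0 : ℝ)..n * (2 * π), sin x / x := by
  have hsum := sum_integral_adjacent_intervals (a := fun k : ℕ => (k : ℝ) * (2 * π))
    (f := fun x => sin x / x) (μ := volume) (n := n)
    fun k _ => intervalIntegrable_sin_div_self _ _
  simp only [Nat.cast_zero, zero_mul, Nat.cast_succ] at hsum
  rw [← hsum]
  exact Finset.sum_nonneg fun k _ => (integral_sin_div_self_period_pos k).le

lemma integral_sin_div_self_zero_nat_mul_two_pi_pos (n : ℕ) :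
    0 < ∫ x in (0 : ℝ)..(n + 1) * (2 * π), sin x / x := by
  rw [← integral_add_adjacent_intervals (intervalIntegrable_sin_div_self _ (n * (2 * π)))
    (intervalIntegrable_sin_div_self _ _)]
  exact add_pos_of_nonneg_of_pos (integral_sin_div_self_zero_nat_mul_two_pi_nonneg n)
    (integral_sin_div_self_period_pos n)

lemma exists_nat_mul_lt_le_succ_mul {p t : ℝ} (hp : 0 < p) (ht : 0 < t) :
    ∃ n : ℕ, n * p < t ∧ t ≤ (n + 1) * p := by
  obtain ⟨n, hn⟩ := Nat.exists_eq_add_one_of_ne_zero (Nat.ceil_pos.2 (div_pos ht hp)).ne'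
  have hle := Nat.le_ceil (t / p)
  have hlt := Nat.ceil_lt_add_one (div_pos ht hp).le
  rw [hn, Nat.cast_add_one] at hle hlt
  exact ⟨n, by rwa [← lt_div_iff₀ hp, ← add_lt_add_iff_right 1], by rwa [← div_le_iff₀ hp]⟩

theorem sine_integral_pos (t : ℝ) (ht : 0 < t) :
    0 < ∫ x in (0:ℝ)..t, Real.sin x / x := by
  obtain ⟨n, hnt, htn⟩ := exists_nat_mul_lt_le_succ_mul (by positivity : 0 < 2 * π) ht
  rcases le_or_gt t (n * (2 * π) + π) with hlobe | hlobe
  · have hsplit := integral_add_adjacent_intervals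
      (intervalIntegrable_sin_div_self 0 (n * (2 * π))) (intervalIntegrable_sin_div_self _ t)
    linarith [integral_sin_div_self_zero_nat_mul_two_pi_nonneg n,
      integral_sin_div_self_pos_of_le_add_pi hnt hlobe]
  · have hsplit := integral_add_adjacent_intervals
      (intervalIntegrable_sin_div_self 0 t) (intervalIntegrable_sin_div_self t ((n + 1) * (2 * π)))
    linarith [integral_sin_div_self_nonpos_of_add_pi_le hlobe.le htn,
      integral_sin_div_self_zero_nat_mul_two_pi_pos n]
end

section
/- For every x ∈ [-π,π] and positive even N, the Dirichlet-type kernel satisfies the step-function bound |sin(N x / 2) / (N sin(x/2))| ≤ Σ_{k=1}^{N/2} (1/k) · 1_{[2π(k-1)/N, 2πk/N)}(|x|), where the right-hand side is the step function equal to 1/k on the annulus 2π(k-1)/N ≤ |x| < 2πk/N. -/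
/-!
Write `D(x) = sin (N x / 2) / (N sin (x / 2))`. Since `|sin (n t)| ≤ n |sin t|`, always `|D(x)| ≤ 1`.
On `[0, π]` concavity gives `sin (x / 2) ≥ x / π`, so if `|x| ≥ 2π (k - 1) / N` with `k ≥ 2`, then
`N |sin (x / 2)| ≥ 2 (k - 1) ≥ k` and `|D(x)| ≤ 1 / k`. Every `|x| < π` lies in exactly one annulus
`2π (k - 1) / N ≤ |x| < 2π k / N` with `1 ≤ k ≤ N / 2`; at `|x| = π` the evenness of `N` makes
`sin (N x / 2)` vanish.
-/

open Real Set

lemma abs_sin_nat_mul_le (n : ℕ) (t : ℝ) : |sin (n * t)| ≤ n * |sin t| := by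
  induction n with
  | zero => simp
  | succ n ih =>
    calc |sin ((n + 1 : ℕ) * t)| = |sin (n * t) * cos t + cos (n * t) * sin t| := by
          push_cast; rw [add_mul, one_mul, sin_add]
      _ ≤ |sin (n * t)| * |cos t| + |cos (n * t)| * |sin t| := by
          rw [← abs_mul, ← abs_mul]; exact abs_add_le _ _
      _ ≤ n * |sin t| * 1 + 1 * |sin t| := by
          gcongr
          exacts [abs_cos_le_one t, abs_cos_le_one _]
      _ = (n + 1 : ℕ) * |sin t| := by push_cast; ring

lemma abs_sin_nat_mul_div_le_one (n : ℕ) (t : ℝ) : |sin (n * t) / (n * sin t)| ≤ 1 := by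
  rw [abs_div, abs_mul, Nat.abs_cast]
  exact div_le_one_of_le₀ (abs_sin_nat_mul_le n t) (by positivity)

lemma div_pi_le_abs_sin_half {x : ℝ} (hx : |x| ≤ π) : |x| / π ≤ |sin (x / 2)| := by
  have hx2 : |x / 2| ≤ π / 2 := by rw [abs_div, abs_two]; linarith
  calc |x| / π = 2 / π * |x / 2| := by rw [abs_div, abs_two]; field_simp
    _ ≤ |sin (x / 2)| := mul_abs_le_abs_sin hx2

lemma abs_sin_mul_half_div_le_inv {n k : ℕ} {x : ℝ} (hn : 0 < n) (hk : 1 ≤ k) (hx : |x| ≤ π)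
    (hkx : 2 * π * (k - 1) / n ≤ |x|) :
    |sin (n * x / 2) / (n * sin (x / 2))| ≤ 1 / k := by
  obtain rfl | hk2 := hk.eq_or_lt
  · simpa [mul_div_assoc] using abs_sin_nat_mul_div_le_one n (x / 2)
  have hk2 : (2 : ℝ) ≤ k := by exact_mod_cast hk2
  have hnR : (0 : ℝ) < n := by exact_mod_cast hn
  have hden : (k : ℝ) ≤ n * |sin (x / 2)| :=
    calc (k : ℝ) ≤ 2 * (k - 1) := by linarith
      _ ≤ n * (|x| / π) := by
          rw [div_le_iff₀ hnR] at hkx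
          rw [mul_div_assoc', le_div_iff₀ pi_pos]
          linarith
      _ ≤ n * |sin (x / 2)| := by gcongr; exact div_pi_le_abs_sin_half hx
  rw [abs_div, abs_mul, Nat.abs_cast]
  calc |sin (n * x / 2)| / (n * |sin (x / 2)|) ≤ 1 / (n * |sin (x / 2)|) := by
        gcongr; exact abs_sin_le_one _
    _ ≤ 1 / k := by gcongr

lemma exists_mem_Icc_mem_Ico_mul {h y : ℝ} {M : ℕ} (hh : 0 < h) (hy0 : 0 ≤ y) (hyM : y < h * M) :
    ∃ k ∈ Finset.Icc 1 M, y ∈ Ico (h * (k - 1)) (h * k) := by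
  have hyh : 0 ≤ y / h := div_nonneg hy0 hh.le
  have hfloor : ⌊y / h⌋₊ < M := (Nat.floor_lt hyh).2 (by rwa [div_lt_iff₀' hh])
  refine ⟨⌊y / h⌋₊ + 1, Finset.mem_Icc.2 ⟨by omega, hfloor⟩, ?_, ?_⟩
  · push_cast
    rw [add_sub_cancel_right, ← le_div_iff₀' hh]
    exact Nat.floor_le hyh
  · push_cast
    rw [← div_lt_iff₀' hh]
    exact Nat.lt_floor_add_one _

lemma sin_nat_mul_div_two_eq_zero {N : ℕ} (hN : Even N) {x : ℝ} (hx : |x| = π) :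
    sin (N * x / 2) = 0 := by
  obtain ⟨M, rfl⟩ := hN
  rw [sin_eq_zero_iff]
  rcases eq_or_eq_neg_of_abs_eq hx with rfl | rfl
  · exact ⟨M, by push_cast; ring⟩
  · exact ⟨-M, by push_cast; ring⟩

theorem dirichlet_kernel_step_function_bound (N : ℕ) (hN : 2 ≤ N)
    (hNeven : Even N) (x : ℝ) (hx : x ∈ Icc (-π) π) :
    |Real.sin (N * x / 2) / (N * Real.sin (x / 2))| ≤
      ∑ k ∈ Finset.Icc 1 (N / 2), (1 / (k : ℝ)) *
        (Set.Ico (2 * π * ((k : ℝ) - 1) / N) (2 * π * k / N)).indicator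
          (fun _ => (1 : ℝ)) |x| := by
  have hterm_nonneg : ∀ k ∈ Finset.Icc 1 (N / 2), 0 ≤ (1 / (k : ℝ)) *
      (Ico (2 * π * ((k : ℝ) - 1) / N) (2 * π * k / N)).indicator (fun _ => (1 : ℝ)) |x| :=
    fun k _ => mul_nonneg (by positivity) (indicator_nonneg (fun _ _ => zero_le_one) _)
  have hNR : (0 : ℝ) < N := by exact_mod_cast (by omega : 0 < N)
  rcases (abs_le.2 hx).eq_or_lt with hxπ | hxπ
  · rw [sin_nat_mul_div_two_eq_zero hNeven hxπ, zero_div, abs_zero]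
    exact Finset.sum_nonneg hterm_nonneg
  have hxM : |x| < 2 * π / N * (N / 2 : ℕ) := by
    rw [Nat.cast_div hNeven.two_dvd (by norm_num), Nat.cast_ofNat]
    field_simp
    linarith
  obtain ⟨k, hk, hxk⟩ := exists_mem_Icc_mem_Ico_mul (by positivity) (abs_nonneg x) hxM
  rw [div_mul_eq_mul_div, div_mul_eq_mul_div] at hxk
  calc |sin (N * x / 2) / (N * sin (x / 2))| ≤ 1 / k :=
        abs_sin_mul_half_div_le_inv (by omega) (Finset.mem_Icc.1 hk).1 (abs_le.2 hx) hxk.1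
    _ = 1 / k * (Ico (2 * π * ((k : ℝ) - 1) / N) (2 * π * k / N)).indicator (fun _ => 1) |x| := by
        rw [indicator_of_mem hxk, mul_one]
    _ ≤ _ := Finset.single_le_sum hterm_nonneg hk
end
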